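/- arXiv:1802.05618 — 3 statements merged into one kernel-verified Lean document; each statement's English description precedes it below -/
import Mathlib

section
/- Let f : [0,1] → ℝ be twice differentiable with |f''(t)| ≤ ρ for all t. Then for m ≥ 2, the Chebyshev wavelet coefficient f_{nm} = (℘_m / sqrt(2^k π)) ∫_0^π f((cos θ + 2n - 1)/2^k) cos(mθ) dθ satisfies |f_{nm}| ≤ sqrt(π / 2^{5k-1}) · ρ/(m² - 1). -/
open Real MeasureTheory Set

/-!
With `F x = f ((x + 2n - 1) / 2^k)` the coefficient is a multiple of `∫₀^π F (cos θ) cos mθ`, and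
`|F''| ≤ ρ / 4^k` on `[-1, 1]`. One integration by parts together with
`2 sin θ sin mθ = cos (m - 1)θ - cos (m + 1)θ` writes this integral as `(c_{m-1} - c_{m+1}) / 2m`,
where `c_j` are the cosine coefficients of `F' ∘ cos`. Since `(F' ∘ cos)' = -(F'' ∘ cos) sin` and
`∫₀^π sin = 2`, a second integration by parts gives `|c_j| ≤ 2 sup |F''| / j`, whence the bound
`2 sup |F''| / (m² - 1)`.
-/

theorem integral_mul_cos_nat_mul {u u' : ℝ → ℝ} {j : ℕ} (hj : j ≠ 0)
    (hu : ∀ θ ∈ uIcc 0 π, HasDerivAt u (u' θ) θ) (hu' : IntervalIntegrable u' volume 0 π) :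
    ∫ θ in 0..π, u θ * cos (j * θ) = -(∫ θ in 0..π, u' θ * sin (j * θ)) / j := by
  have hj : (j : ℝ) ≠ 0 := Nat.cast_ne_zero.2 hj
  have hsin : ∀ θ ∈ uIcc 0 π, HasDerivAt (fun θ => sin (j * θ) / j) (cos (j * θ)) θ := by
    intro θ _
    simpa [hj] using (((hasDerivAt_id θ).const_mul (j : ℝ)).sin).div_const (j : ℝ)
  rw [intervalIntegral.integral_mul_deriv_eq_deriv_mul hu hsin hu'
    ((by fun_prop : Continuous fun θ : ℝ => cos (j * θ)).intervalIntegrable _ _)]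
  simp only [sin_nat_mul_pi, sin_zero, mul_zero, zero_div, sub_zero, zero_sub, mul_div_assoc',
    intervalIntegral.integral_div, neg_div]

theorem abs_integral_mul_cos_nat_mul_le {u u' : ℝ → ℝ} {C : ℝ} {j : ℕ} (hj : j ≠ 0)
    (hu : ∀ θ, HasDerivAt u (u' θ) θ) (hC : ∀ θ ∈ Icc 0 π, |u' θ| ≤ C * sin θ) :
    |∫ θ in 0..π, u θ * cos (j * θ)| ≤ 2 * C / j := by
  have hderiv : deriv u = u' := funext fun θ => (hu θ).deriv
  have hC' : ∀ᵐ θ ∂volume, θ ∈ Ioc 0 π → |u' θ| ≤ C * sin θ :=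
    ae_of_all _ fun θ hθ => hC θ (Ioc_subset_Icc_self hθ)
  have hbound : IntervalIntegrable (fun θ => C * sin θ) volume 0 π :=
    (continuous_const.mul continuous_sin).intervalIntegrable 0 π
  have hu' : IntervalIntegrable u' volume 0 π := by
    refine hbound.mono_fun' (hderiv ▸ (measurable_deriv u).aestronglyMeasurable) ?_
    rw [uIoc_of_le pi_nonneg, ← ae_restrict_iff' measurableSet_Ioc] at *
    exact hC'
  have hsin_int : |∫ θ in 0..π, u' θ * sin (j * θ)| ≤ ∫ θ in 0..π, C * sin θ := by
    rw [← norm_eq_abs]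
    refine intervalIntegral.norm_integral_le_of_norm_le pi_nonneg ?_ hbound
    filter_upwards [hC'] with θ hθ hmem
    rw [norm_mul, norm_eq_abs, norm_eq_abs]
    calc |u' θ| * |sin (j * θ)| ≤ |u' θ| * 1 := by gcongr; exact abs_sin_le_one _
      _ ≤ C * sin θ := by rw [mul_one]; exact hθ hmem
  rw [integral_mul_cos_nat_mul hj (fun θ _ => hu θ) hu', abs_div, abs_neg, Nat.abs_cast]
  gcongr
  calc _ ≤ ∫ θ in 0..π, C * sin θ := hsin_int
    _ = 2 * C := by
      simp only [intervalIntegral.integral_const_mul, integral_sin, cos_zero, cos_pi]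
      ring

theorem abs_integral_comp_cos_mul_cos_le {F F' F'' : ℝ → ℝ} {M : ℝ} {m : ℕ} (hm : 2 ≤ m)
    (hF : ∀ x ∈ Icc (-1) 1, HasDerivAt F (F' x) x)
    (hF' : ∀ x ∈ Icc (-1) 1, HasDerivAt F' (F'' x) x)
    (hM : ∀ x ∈ Icc (-1) 1, |F'' x| ≤ M) :
    |∫ θ in 0..π, F (cos θ) * cos (m * θ)| ≤ 2 * M / (m ^ 2 - 1) := by
  have hcos (θ : ℝ) : cos θ ∈ Icc (-1) 1 := ⟨neg_one_le_cos θ, cos_le_one θ⟩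
  have hu (θ : ℝ) : HasDerivAt (fun θ => F (cos θ)) (F' (cos θ) * -sin θ) θ :=
    (hF _ (hcos θ)).comp θ (hasDerivAt_cos θ)
  have hv (θ : ℝ) : HasDerivAt (fun θ => F' (cos θ)) (F'' (cos θ) * -sin θ) θ :=
    (hF' _ (hcos θ)).comp θ (hasDerivAt_cos θ)
  have hv_cont : Continuous fun θ => F' (cos θ) :=
    continuous_iff_continuousAt.2 fun θ => (hv θ).continuousAt
  have hcoeff {j : ℕ} (hj : j ≠ 0) : |∫ θ in 0..π, F' (cos θ) * cos (j * θ)| ≤ 2 * M / j := by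
    refine abs_integral_mul_cos_nat_mul_le hj hv fun θ hθ => ?_
    rw [abs_mul, abs_neg, abs_of_nonneg (sin_nonneg_of_nonneg_of_le_pi hθ.1 hθ.2)]
    exact mul_le_mul_of_nonneg_right (hM _ (hcos θ)) (sin_nonneg_of_nonneg_of_le_pi hθ.1 hθ.2)
  have hint (j : ℕ) : IntervalIntegrable (fun θ => F' (cos θ) * cos (j * θ)) volume 0 π :=
    (hv_cont.mul (by fun_prop)).intervalIntegrable _ _
  have hm_sub : ((m - 1 : ℕ) : ℝ) = m - 1 := by rw [Nat.cast_sub (by omega), Nat.cast_one]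
  have hsplit : ∫ θ in 0..π, F (cos θ) * cos (m * θ) =
      ((∫ θ in 0..π, F' (cos θ) * cos ((m - 1 : ℕ) * θ)) -
        ∫ θ in 0..π, F' (cos θ) * cos ((m + 1 : ℕ) * θ)) / (2 * m) := by
    have hprod (θ : ℝ) : F' (cos θ) * -sin θ * sin (m * θ) =
        -((F' (cos θ) * cos ((m - 1 : ℕ) * θ) - F' (cos θ) * cos ((m + 1 : ℕ) * θ)) / 2) := by
      rw [hm_sub, Nat.cast_add_one, sub_one_mul, add_one_mul]
      linear_combination (-F' (cos θ) / 2) * two_mul_sin_mul_sin (m * θ) θ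
    rw [integral_mul_cos_nat_mul (by omega) (fun θ _ => hu θ)
        ((hv_cont.mul (by fun_prop)).intervalIntegrable _ _),
      funext hprod, intervalIntegral.integral_neg, intervalIntegral.integral_div,
      intervalIntegral.integral_sub (hint _) (hint _)]
    ring
  have hm2 : (2 : ℝ) ≤ m := by exact_mod_cast hm
  rw [hsplit, abs_div, abs_of_pos (by positivity : (0 : ℝ) < 2 * m)]
  calc _ ≤ (2 * M / (m - 1 : ℕ) + 2 * M / (m + 1 : ℕ)) / (2 * m) := by
        gcongr
        exact (abs_sub _ _).trans (add_le_add (hcoeff (by omega)) (hcoeff (by omega)))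
    _ = 2 * M / (m ^ 2 - 1) := by
        rw [hm_sub, Nat.cast_add_one]
        field_simp [show (m : ℝ) - 1 ≠ 0 by linarith, show (m : ℝ) ^ 2 - 1 ≠ 0 by nlinarith]
        ring

theorem sqrt_two_div_sqrt_two_pow_mul_pi_mul_le (k : ℕ) :
    √2 / √(2 ^ k * π) * (2 / ((2 : ℝ) ^ k) ^ 2) ≤ √(π / 2 ^ (5 * k - 1)) := by
  rw [le_sqrt (by positivity) (by positivity), mul_pow, div_pow, div_pow, sq_sqrt zero_le_two,
    sq_sqrt (by positivity), div_mul_div_comm, div_le_div_iff₀ (by positivity) (by positivity)]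
  have hpow : (2 : ℝ) ^ (5 * k - 1) ≤ 2 ^ k * ((2 ^ k) ^ 2) ^ 2 := by
    rw [← pow_mul, ← pow_mul, ← pow_add]
    exact pow_le_pow_right₀ one_le_two (by omega)
  have hpi : (9 : ℝ) ≤ π * π := by nlinarith [pi_gt_three]
  have hS : (0 : ℝ) ≤ 2 ^ k * ((2 ^ k) ^ 2) ^ 2 := by positivity
  nlinarith [mul_le_mul_of_nonneg_right hpi hS]

theorem add_two_mul_sub_one_div_two_pow_mem_Icc {x : ℝ} {k n : ℕ} (hk : 1 ≤ k) (hn : 1 ≤ n)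
    (hn' : n ≤ 2 ^ (k - 1)) (hx : x ∈ Icc (-1) 1) : (x + 2 * n - 1) / 2 ^ k ∈ Icc (0 : ℝ) 1 := by
  have hn1 : (1 : ℝ) ≤ n := by exact_mod_cast hn
  have hn2 : 2 * (n : ℝ) ≤ 2 ^ k := by
    rw [← pow_sub_one_mul (by omega : k ≠ 0), mul_comm]
    gcongr
    exact_mod_cast hn'
  rw [mem_Icc, le_div_iff₀ (by positivity), div_le_iff₀ (by positivity)]
  constructor <;> linarith [hx.1, hx.2]

/-- Bound on Chebyshev wavelet coefficients for m ≥ 2 for a twice differentiable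
function with bounded second derivative. -/
theorem chebyshev_wavelet_coeff_bound (k n m : ℕ) (hk : 1 ≤ k) (hn : 1 ≤ n)
    (hn' : n ≤ 2 ^ (k - 1)) (hm : 2 ≤ m) (f f' f'' : ℝ → ℝ) (ρ : ℝ)
    (hd1 : ∀ t ∈ Set.Icc (0 : ℝ) 1, HasDerivAt f (f' t) t)
    (hd2 : ∀ t ∈ Set.Icc (0 : ℝ) 1, HasDerivAt f' (f'' t) t)
    (hρ : ∀ t ∈ Set.Icc (0 : ℝ) 1, |f'' t| ≤ ρ) :
    |(Real.sqrt 2 / Real.sqrt (2 ^ k * Real.pi)) *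
        ∫ θ in (0 : ℝ)..Real.pi, f ((Real.cos θ + 2 * n - 1) / 2 ^ k) * Real.cos (m * θ)| ≤
      Real.sqrt (Real.pi / 2 ^ (5 * k - 1)) * (ρ / ((m : ℝ) ^ 2 - 1)) := by
  set X : ℝ → ℝ := fun x => (x + 2 * n - 1) / 2 ^ k
  have hX (x : ℝ) (hx : x ∈ Icc (-1) 1) : X x ∈ Icc 0 1 :=
    add_two_mul_sub_one_div_two_pow_mem_Icc hk hn hn' hx
  have hX_deriv (x : ℝ) : HasDerivAt X (1 / 2 ^ k) x :=
    (((hasDerivAt_id x).add_const _).sub_const _).div_const _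
  have hI := abs_integral_comp_cos_mul_cos_le (F := f ∘ X) (M := ρ / (2 ^ k) ^ 2) hm
    (fun x hx => (hd1 _ (hX x hx)).comp x (hX_deriv x))
    (fun x hx => ((hd2 _ (hX x hx)).comp x (hX_deriv x)).mul_const _)
    (fun x hx => by
      rw [abs_mul, abs_mul, abs_of_pos (by positivity : (0 : ℝ) < 1 / 2 ^ k), mul_assoc,
        one_div_mul_one_div, ← sq, ← div_eq_mul_one_div]
      gcongr
      exact hρ _ (hX x hx))
  have hρ0 : 0 ≤ ρ := (abs_nonneg _).trans (hρ 0 (left_mem_Icc.2 zero_le_one))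
  have hm2 : (2 : ℝ) ≤ m := by exact_mod_cast hm
  rw [abs_mul, abs_of_nonneg (by positivity)]
  calc _ ≤ √2 / √(2 ^ k * π) * (2 * (ρ / (2 ^ k) ^ 2) / (m ^ 2 - 1)) := by gcongr; exact hI
    _ = √2 / √(2 ^ k * π) * (2 / ((2 : ℝ) ^ k) ^ 2) * (ρ / (m ^ 2 - 1)) := by ring
    _ ≤ _ := by
      have hm_sq : (0 : ℝ) ≤ (m : ℝ) ^ 2 - 1 := by nlinarith
      gcongr
      exact sqrt_two_div_sqrt_two_pow_mul_pi_mul_le k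
end

section
/- Let f : [0,1] → ℝ be differentiable with |f'(t)| ≤ ρ₁ for all t. Then the Chebyshev wavelet coefficient f_{n1} = (√2 / sqrt(2^k π)) ∫_0^π f((cos θ + 2n - 1)/2^k) cos θ dθ satisfies |f_{n1}| ≤ sqrt(π / 2^{3k-1}) · ρ₁. -/
/-!
Since `∫₀^π cos θ dθ = 0`, the value `f(m)` at the centre `m = (2n - 1) / 2^k` of the support
can be subtracted from the integrand. The node `(cos θ + 2n - 1) / 2^k` lies in `[0, 1]` at
distance `|cos θ| / 2^k` from `m`, so the mean value inequality bounds the integrand by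
`ρ₁ cos² θ / 2^k`, whose integral is `ρ₁ π / 2^(k+1)`. With the normalising factor this gives
`√(π / 2^(3k+1)) ρ₁`, half the claimed bound.
-/

open Real intervalIntegral MeasureTheory

theorem abs_integral_mul_cos_le {g : ℝ → ℝ} (c L : ℝ) (hg : IntervalIntegrable g volume 0 π)
    (hL : ∀ θ ∈ Set.Icc 0 π, |g θ - c| ≤ L * |cos θ|) :
    |∫ θ in (0 : ℝ)..π, g θ * cos θ| ≤ L * (π / 2) := by
  have hsub_const : ∫ θ in (0 : ℝ)..π, g θ * cos θ = ∫ θ in (0 : ℝ)..π, (g θ - c) * cos θ := by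
    simp_rw [sub_mul]
    rw [integral_sub (hg.mul_continuousOn continuousOn_cos)
      ((by fun_prop : Continuous fun θ => c * cos θ).intervalIntegrable _ _)]
    simp
  have hcos_sq : ∫ θ in (0 : ℝ)..π, L * cos θ ^ 2 = L * (π / 2) := by
    simp [integral_cos_sq]
  rw [hsub_const, ← hcos_sq, ← norm_eq_abs]
  refine norm_integral_le_of_norm_le pi_pos.le (ae_of_all _ fun θ hθ => ?_)
    ((by fun_prop : Continuous fun θ => L * cos θ ^ 2).intervalIntegrable _ _)
  rw [norm_mul, norm_eq_abs, norm_eq_abs, ← sq_abs (cos θ), sq, ← mul_assoc]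
  exact mul_le_mul_of_nonneg_right (hL θ (Set.Ioc_subset_Icc_self hθ)) (abs_nonneg _)

theorem add_two_mul_sub_one_div_mem_Icc {n : ℕ} {K c : ℝ} (hn : 1 ≤ n) (hK : 2 * n ≤ K)
    (hc : c ∈ Set.Icc (-1) 1) : (c + 2 * n - 1) / K ∈ Set.Icc 0 1 := by
  have hn1 : (1 : ℝ) ≤ n := by exact_mod_cast hn
  obtain ⟨hc₁, hc₂⟩ := hc
  constructor
  · apply div_nonneg <;> linarith
  · rw [div_le_one (by linarith)]; linarith

theorem sqrt_two_div_sqrt_pow_mul_pi_mul_le (k : ℕ) :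
    √2 / √(2 ^ k * π) * (π / 2 ^ k / 2) ≤ √(π / 2 ^ (3 * k - 1)) := by
  have hsqrt : √2 / √(2 ^ k * π) * (π / 2 ^ k / 2) = √(π / 2 ^ (3 * k + 1)) := by
    rw [← sqrt_sq (by positivity : 0 ≤ π / 2 ^ k / 2), ← sqrt_div' _ (by positivity),
      ← sqrt_mul' _ (by positivity)]
    congr 1
    field_simp
    ring
  rw [hsqrt]
  gcongr
  · norm_num
  · omega

/-- Bound on the Chebyshev wavelet coefficient f_{n1} for a differentiable
function with bounded derivative. -/
theorem chebyshev_wavelet_coeff_one_bound (k n : ℕ) (hk : 1 ≤ k) (hn : 1 ≤ n)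
    (hn' : n ≤ 2 ^ (k - 1)) (f f' : ℝ → ℝ) (ρ₁ : ℝ)
    (hd : ∀ t ∈ Set.Icc (0 : ℝ) 1, HasDerivAt f (f' t) t)
    (hρ : ∀ t ∈ Set.Icc (0 : ℝ) 1, |f' t| ≤ ρ₁) :
    |(Real.sqrt 2 / Real.sqrt (2 ^ k * Real.pi)) *
        ∫ θ in (0 : ℝ)..Real.pi, f ((Real.cos θ + 2 * n - 1) / 2 ^ k) * Real.cos θ| ≤
      Real.sqrt (Real.pi / 2 ^ (3 * k - 1)) * ρ₁ := by
  have hρ₁ : 0 ≤ ρ₁ := (abs_nonneg _).trans (hρ 0 (Set.left_mem_Icc.2 zero_le_one))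
  have hK : 2 * n ≤ 2 ^ k := calc
    2 * n ≤ 2 * 2 ^ (k - 1) := by omega
    _ = 2 ^ k := by rw [← pow_succ', Nat.sub_add_cancel hk]
  have hmem (c : ℝ) (hc : c ∈ Set.Icc (-1) 1) :=
    add_two_mul_sub_one_div_mem_Icc hn (by exact_mod_cast hK : (2 * n : ℝ) ≤ 2 ^ k) hc
  have hcos (θ : ℝ) : cos θ ∈ Set.Icc (-1) 1 := ⟨neg_one_le_cos θ, cos_le_one θ⟩
  have hlip (θ : ℝ) : |f ((cos θ + 2 * n - 1) / 2 ^ k) - f ((0 + 2 * n - 1) / 2 ^ k)|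
      ≤ ρ₁ / 2 ^ k * |cos θ| := calc
    _ ≤ ρ₁ * |(cos θ + 2 * n - 1) / 2 ^ k - (0 + 2 * n - 1) / 2 ^ k| :=
      (convex_Icc (0 : ℝ) 1).norm_image_sub_le_of_norm_hasDerivWithin_le
        (fun t ht => (hd t ht).hasDerivWithinAt) hρ (hmem 0 (by norm_num)) (hmem _ (hcos θ))
    _ = ρ₁ / 2 ^ k * |cos θ| := by
      rw [← sub_div, abs_div, abs_of_pos (by positivity : (0 : ℝ) < 2 ^ k)]; ring_nf
  have hf : ContinuousOn f (Set.Icc 0 1) := fun t ht => (hd t ht).continuousAt.continuousWithinAt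
  have hint : IntervalIntegrable (fun θ => f ((cos θ + 2 * n - 1) / 2 ^ k)) volume 0 π :=
    (hf.comp (by fun_prop) fun θ _ => hmem _ (hcos θ)).intervalIntegrable
  calc _ = √2 / √(2 ^ k * π) * |∫ θ in (0 : ℝ)..π, f ((cos θ + 2 * n - 1) / 2 ^ k) * cos θ| := by
        rw [abs_mul, abs_of_nonneg (by positivity)]
    _ ≤ √2 / √(2 ^ k * π) * (ρ₁ / 2 ^ k * (π / 2)) := by
        gcongr
        exact abs_integral_mul_cos_le _ _ hint fun θ _ => hlip θ
    _ = √2 / √(2 ^ k * π) * (π / 2 ^ k / 2) * ρ₁ := by ring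
    _ ≤ √(π / 2 ^ (3 * k - 1)) * ρ₁ := by
        gcongr
        exact sqrt_two_div_sqrt_pow_mul_pi_mul_le k
end

section
/- Let f : [0,1] → ℝ be twice continuously differentiable with |f(t)| ≤ ρ₀, |f'(t)| ≤ ρ₁, and |f''(t)| ≤ ρ for all t ∈ [0,1]. Then for each n, the series Σ_{m=0}^∞ f_{nm} ψ_{nm}(t) converges absolutely and uniformly on [(n-1)/2^{k-1}, n/2^{k-1}], and its partial sums are bounded by ρ₀ + ρ₁/2^{k-1} + (3/4)·ρ/2^{2k-1}. -/
open Polynomial Chebyshev Real MeasureTheory intervalIntegral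

/-- The factor ℘_m: 1 for m = 0 and √2 for m ≥ 1. -/
noncomputable def wp (m : ℕ) : ℝ := if m = 0 then 1 else Real.sqrt 2

open scoped Classical in
/-- The Chebyshev wavelet ψ_{nm} at level k, on [0,1]. -/
noncomputable def psi (k n m : ℕ) (t : ℝ) : ℝ :=
  if ((n - 1 : ℝ) / 2 ^ (k - 1) ≤ t ∧ t ≤ (n : ℝ) / 2 ^ (k - 1)) then
    Real.sqrt (2 ^ k / Real.pi) * wp m *
      (Polynomial.Chebyshev.T ℝ m).eval (2 ^ k * t - 2 * n + 1)
  else 0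

/-- The Chebyshev wavelet coefficient of `f` for indices `n, m`. -/
noncomputable def coeff (k n m : ℕ) (f : ℝ → ℝ) : ℝ :=
  (wp m / Real.sqrt (2 ^ k * Real.pi)) *
    ∫ x in (0 : ℝ)..Real.pi, f ((Real.cos x + 2 * n - 1) / 2 ^ k) * Real.cos (m * x)

/-!
Substituting `t = (cos x + 2n - 1) / 2^k` turns `f_{nm}` into a multiple of the cosine moment
`∫₀^π f(t(x)) cos(mx) dx`. As `dt/dx = -sin x / 2^k`, one integration by parts bounds the
moment by `ρ₁π / (m 2^k)`; writing `sin x sin(mx)` as `(cos((m-1)x) - cos((m+1)x)) / 2` and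
integrating by parts once more bounds it by `ρπ / (2^{2k} (m² - 1))`. With `|T_m| ≤ 1` on
`[-1, 1]` the terms `f_{nm} ψ_{nm}(t)` are dominated by `ρ₀`, `ρ₁ / 2^{k-1}` and
`ρ / (2^{2k-1} (m² - 1))`, and `Σ_{m ≥ 2} 1 / (m² - 1) = 3/4`; the Weierstrass M-test does the rest.
-/

open Set

theorem integral_mul_cos_nat_mul_eq {F F' : ℝ → ℝ}
    (hF : ∀ x ∈ Icc 0 π, HasDerivAt F (F' x) x) (hF' : ContinuousOn F' (Icc 0 π))
    {j : ℕ} (hj : j ≠ 0) :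
    ∫ x in (0 : ℝ)..π, F x * cos (j * x) = -(∫ x in (0 : ℝ)..π, F' x * sin (j * x)) / j := by
  have hj' : (j : ℝ) ≠ 0 := Nat.cast_ne_zero.mpr hj
  have hI : uIcc 0 π = Icc 0 π := uIcc_of_le pi_pos.le
  have hsin (x : ℝ) : HasDerivAt (fun x => sin (j * x) / j) (cos (j * x)) x :=
    (((hasDerivAt_id x).const_mul (j : ℝ)).sin.div_const (j : ℝ)).congr_deriv (by simp [hj'])
  rw [intervalIntegral.integral_mul_deriv_eq_deriv_mul (hI ▸ hF) (fun x _ => hsin x)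
    (hF'.intervalIntegrable_of_Icc pi_pos.le)
    ((by fun_prop : Continuous fun x => cos (j * x)).intervalIntegrable 0 π)]
  simp only [sin_nat_mul_pi, mul_zero, sin_zero, zero_div, mul_div_assoc',
    intervalIntegral.integral_div]
  ring

theorem abs_integral_zero_pi_le {g : ℝ → ℝ} {C : ℝ} (hg : ∀ x ∈ Icc 0 π, |g x| ≤ C) :
    |∫ x in (0 : ℝ)..π, g x| ≤ C * π := by
  have := norm_integral_le_of_norm_le_const (a := 0) (b := π) (C := C) (f := g)
    fun x hx => hg x (Ioc_subset_Icc_self (uIoc_of_le pi_pos.le ▸ hx))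
  rwa [sub_zero, abs_of_pos pi_pos] at this

noncomputable def waveletNode (k n : ℕ) (x : ℝ) : ℝ := (cos x + 2 * n - 1) / 2 ^ k

noncomputable def cosMoment (k n : ℕ) (h : ℝ → ℝ) (m : ℝ) : ℝ :=
  ∫ x in (0 : ℝ)..π, h (waveletNode k n x) * cos (m * x)

theorem coeff_eq_mul_cosMoment (k n m : ℕ) (f : ℝ → ℝ) :
    coeff k n m f = wp m / √(2 ^ k * π) * cosMoment k n f m := rfl

theorem two_pow_eq_two_mul_two_pow_pred {k : ℕ} (hk : 1 ≤ k) : (2 : ℝ) ^ k = 2 * 2 ^ (k - 1) := by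
  rw [← pow_succ', Nat.sub_add_cancel hk]

theorem waveletNode_mem_Icc {k n : ℕ} (hk : 1 ≤ k) (hn : 1 ≤ n) (hn' : n ≤ 2 ^ (k - 1))
    (x : ℝ) : waveletNode k n x ∈ Icc 0 1 := by
  have hn₁ : (1 : ℝ) ≤ n := by exact_mod_cast hn
  have hn₂ : (n : ℝ) ≤ 2 ^ (k - 1) := by exact_mod_cast hn'
  have h2k := two_pow_eq_two_mul_two_pow_pred hk
  rw [waveletNode, mem_Icc, le_div_iff₀ (by positivity), div_le_one (by positivity)]
  constructor <;> nlinarith [neg_one_le_cos x, cos_le_one x]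

theorem continuous_waveletNode (k n : ℕ) : Continuous (waveletNode k n) := by
  unfold waveletNode; fun_prop

section CosMoment

variable {k n : ℕ} {h h' h'' : ℝ → ℝ} {C : ℝ}

theorem abs_cosMoment_le (hnode : ∀ x, waveletNode k n x ∈ Icc 0 1)
    (hb : ∀ t ∈ Icc 0 1, |h t| ≤ C) (m : ℝ) : |cosMoment k n h m| ≤ C * π :=
  abs_integral_zero_pi_le fun x _ => by
    rw [abs_mul]
    exact (mul_le_of_le_one_right (abs_nonneg _) (abs_cos_le_one _)).trans (hb _ (hnode x))

theorem continuousOn_comp_waveletNode (hnode : ∀ x, waveletNode k n x ∈ Icc 0 1)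
    (hc : ContinuousOn h (Icc 0 1)) : ContinuousOn (fun x => h (waveletNode k n x)) (Icc 0 π) :=
  hc.comp (continuous_waveletNode k n).continuousOn fun x _ => hnode x

theorem cosMoment_eq_integral_mul_sin_mul_sin (hnode : ∀ x, waveletNode k n x ∈ Icc 0 1)
    (hd : ∀ t ∈ Icc 0 1, HasDerivAt h (h' t) t) (hc : ContinuousOn h' (Icc 0 1))
    {j : ℕ} (hj : j ≠ 0) :
    cosMoment k n h j
      = (∫ x in (0 : ℝ)..π, h' (waveletNode k n x) * sin x * sin (j * x)) / (j * 2 ^ k) := by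
  have hderiv (x : ℝ) :
      HasDerivAt (fun x => h (waveletNode k n x)) (h' (waveletNode k n x) * (-sin x / 2 ^ k)) x :=
    (hd _ (hnode x)).comp x ((((hasDerivAt_cos x).add_const _).sub_const 1).div_const _)
  rw [cosMoment, integral_mul_cos_nat_mul_eq (fun x _ => hderiv x)
    ((continuousOn_comp_waveletNode hnode hc).mul (by fun_prop)) hj]
  have hintegrand (x : ℝ) : h' (waveletNode k n x) * (-sin x / 2 ^ k) * sin (j * x)
      = -(h' (waveletNode k n x) * sin x * sin (j * x)) / 2 ^ k := by ring
  simp_rw [hintegrand, intervalIntegral.integral_div, intervalIntegral.integral_neg]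
  field_simp

theorem abs_cosMoment_nat_le (hnode : ∀ x, waveletNode k n x ∈ Icc 0 1)
    (hd : ∀ t ∈ Icc 0 1, HasDerivAt h (h' t) t) (hc : ContinuousOn h' (Icc 0 1))
    (hb : ∀ t ∈ Icc 0 1, |h' t| ≤ C) {j : ℕ} (hj : j ≠ 0) :
    |cosMoment k n h j| ≤ C * π / (j * 2 ^ k) := by
  rw [cosMoment_eq_integral_mul_sin_mul_sin hnode hd hc hj, abs_div,
    abs_of_pos (by positivity : (0 : ℝ) < j * 2 ^ k)]
  refine div_le_div_of_nonneg_right (abs_integral_zero_pi_le fun x _ => ?_) (by positivity)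
  rw [abs_mul, abs_mul]
  exact ((mul_le_of_le_one_right (by positivity) (abs_sin_le_one _)).trans
    (mul_le_of_le_one_right (abs_nonneg _) (abs_sin_le_one _))).trans (hb _ (hnode x))

theorem cosMoment_succ_eq (hnode : ∀ x, waveletNode k n x ∈ Icc 0 1)
    (hd : ∀ t ∈ Icc 0 1, HasDerivAt h (h' t) t) (hc : ContinuousOn h' (Icc 0 1)) (j : ℕ) :
    cosMoment k n h ↑(j + 1)
      = (cosMoment k n h' j - cosMoment k n h' ↑(j + 2)) / (2 * ↑(j + 1) * 2 ^ k) := by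
  have hint (m : ℝ) :
      IntervalIntegrable (fun x => h' (waveletNode k n x) * cos (m * x)) volume 0 π :=
    ((continuousOn_comp_waveletNode hnode hc).mul (by fun_prop)).intervalIntegrable_of_Icc
      pi_pos.le
  have hprod (x : ℝ) : h' (waveletNode k n x) * sin x * sin (↑(j + 1) * x)
      = (h' (waveletNode k n x) * cos (j * x) - h' (waveletNode k n x) * cos (↑(j + 2) * x))
        / 2 := by
    have e₁ : (j : ℝ) * x = (j + 1) * x - x := by ring
    have e₂ : ((j + 2 : ℕ) : ℝ) * x = (j + 1) * x + x := by push_cast; ring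
    rw [e₁, e₂, cos_sub, cos_add]
    push_cast
    ring
  rw [cosMoment_eq_integral_mul_sin_mul_sin hnode hd hc j.succ_ne_zero,
    integral_congr fun x _ => hprod x, intervalIntegral.integral_div,
    intervalIntegral.integral_sub (hint _) (hint _), cosMoment, cosMoment]
  ring

theorem abs_cosMoment_add_two_le (hnode : ∀ x, waveletNode k n x ∈ Icc 0 1)
    (hd : ∀ t ∈ Icc 0 1, HasDerivAt h (h' t) t) (hd' : ∀ t ∈ Icc 0 1, HasDerivAt h' (h'' t) t)
    (hc : ContinuousOn h'' (Icc 0 1)) (hb : ∀ t ∈ Icc 0 1, |h'' t| ≤ C) (m : ℕ) :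
    |cosMoment k n h ↑(m + 2)| ≤ C * π / (2 ^ k) ^ 2 / ((m + 1) * (m + 3)) := by
  have hc' : ContinuousOn h' (Icc 0 1) := fun t ht => (hd' t ht).continuousAt.continuousWithinAt
  have h₁ := abs_cosMoment_nat_le hnode hd' hc hb m.succ_ne_zero
  have h₃ := abs_cosMoment_nat_le hnode hd' hc hb (m + 2).succ_ne_zero
  rw [cosMoment_succ_eq hnode hd hc' (m + 1), abs_div,
    abs_of_pos (by positivity : (0 : ℝ) < 2 * ↑(m + 1 + 1) * 2 ^ k)]
  calc _ ≤ (|cosMoment k n h' ↑(m + 1)| + |cosMoment k n h' ↑(m + 1 + 2)|)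
        / (2 * ↑(m + 1 + 1) * 2 ^ k) := by gcongr ?_ / _; exact abs_sub _ _
    _ ≤ (C * π / (↑(m + 1) * 2 ^ k) + C * π / (↑(m + 2 + 1) * 2 ^ k))
        / (2 * ↑(m + 1 + 1) * 2 ^ k) := by gcongr
    _ = _ := by push_cast; field_simp; ring

end CosMoment

theorem wp_nonneg (m : ℕ) : 0 ≤ wp m := by
  unfold wp; split_ifs <;> positivity

theorem sq_wp_of_ne_zero {m : ℕ} (hm : m ≠ 0) : wp m ^ 2 = 2 := by
  rw [wp, if_neg hm, sq_sqrt zero_le_two]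

theorem abs_psi_le {k : ℕ} (hk : 1 ≤ k) (n m : ℕ) (t : ℝ) :
    |psi k n m t| ≤ √(2 ^ k / π) * wp m := by
  have hwp := wp_nonneg m
  unfold _root_.psi
  split_ifs with ht
  · obtain ⟨ht₁, ht₂⟩ := ht
    rw [div_le_iff₀ (by positivity)] at ht₁
    rw [le_div_iff₀ (by positivity)] at ht₂
    have h2k := two_pow_eq_two_mul_two_pow_pred hk
    rw [abs_mul, abs_of_nonneg (by positivity)]
    refine mul_le_of_le_one_right (by positivity) (abs_eval_T_real_le_one _ ?_)
    rw [abs_le, h2k]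
    constructor <;> linarith
  · rw [abs_zero]
    positivity

theorem abs_coeff_mul_psi_le {k : ℕ} (hk : 1 ≤ k) (n m : ℕ) (f : ℝ → ℝ) (t : ℝ) :
    |coeff k n m f * psi k n m t| ≤ wp m ^ 2 / π * |cosMoment k n f m| := by
  have hwp := wp_nonneg m
  rw [coeff_eq_mul_cosMoment, abs_mul, abs_mul, abs_of_nonneg (by positivity)]
  calc _ ≤ wp m / √(2 ^ k * π) * |cosMoment k n f m| * (√(2 ^ k / π) * wp m) := by
        gcongr
        exact abs_psi_le hk n m t
    _ = _ := by
        rw [sqrt_mul (by positivity), sqrt_div (by positivity)]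
        have := sq_sqrt pi_pos.le
        field_simp
        rw [this]
        ring

theorem sum_range_one_div_add_one_mul_add_three (N : ℕ) :
    ∑ i ∈ Finset.range N, (1 : ℝ) / ((i + 1) * (i + 3))
      = 3 / 4 - 1 / (2 * (N + 1)) - 1 / (2 * (N + 2)) := by
  induction N with
  | zero => norm_num
  | succ N ih =>
    rw [Finset.sum_range_succ, ih]
    push_cast
    field_simp
    ring

noncomputable def waveletMajorant (k : ℕ) (ρ₀ ρ₁ ρ : ℝ) : ℕ → ℝ
  | 0 => ρ₀
  | 1 => ρ₁ / 2 ^ (k - 1)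
  | m + 2 => ρ / 2 ^ (2 * k - 1) / ((m + 1) * (m + 3))

section Majorant

variable {k : ℕ} {ρ₀ ρ₁ ρ : ℝ}

theorem waveletMajorant_nonneg (hρ₀ : 0 ≤ ρ₀) (hρ₁ : 0 ≤ ρ₁) (hρ : 0 ≤ ρ) (m : ℕ) :
    0 ≤ waveletMajorant k ρ₀ ρ₁ ρ m := by
  rcases m with _ | _ | m <;> unfold waveletMajorant <;> positivity

theorem sum_range_waveletMajorant_le (hρ₀ : 0 ≤ ρ₀) (hρ₁ : 0 ≤ ρ₁) (hρ : 0 ≤ ρ) (N : ℕ) :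
    ∑ m ∈ Finset.range N, waveletMajorant k ρ₀ ρ₁ ρ m
      ≤ ρ₀ + ρ₁ / 2 ^ (k - 1) + 3 / 4 * (ρ / 2 ^ (2 * k - 1)) := by
  have htail : ∑ i ∈ Finset.range N, (1 : ℝ) / ((i + 1) * (i + 3)) ≤ 3 / 4 := by
    rw [sum_range_one_div_add_one_mul_add_three]
    have : (0 : ℝ) ≤ 1 / (2 * (N + 1)) + 1 / (2 * (N + 2)) := by positivity
    linarith
  calc _ ≤ ∑ m ∈ Finset.range (N + 2), waveletMajorant k ρ₀ ρ₁ ρ m :=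
        Finset.sum_le_sum_of_subset_of_nonneg (Finset.range_subset_range.mpr (by omega))
          fun m _ _ => waveletMajorant_nonneg hρ₀ hρ₁ hρ m
    _ = ρ₀ + ρ₁ / 2 ^ (k - 1)
          + ρ / 2 ^ (2 * k - 1) * ∑ i ∈ Finset.range N, (1 : ℝ) / ((i + 1) * (i + 3)) := by
        simp only [Finset.sum_range_succ', Finset.mul_sum, waveletMajorant, mul_one_div]
        ring
    _ ≤ _ := by rw [mul_comm (3 / 4 : ℝ)]; gcongr

end Majorant

section Bounds

variable {k n : ℕ} {f f' f'' : ℝ → ℝ} {ρ₀ ρ₁ ρ : ℝ}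

theorem abs_coeff_mul_psi_le_waveletMajorant (hk : 1 ≤ k)
    (hnode : ∀ x, waveletNode k n x ∈ Icc 0 1)
    (hd1 : ∀ t ∈ Icc 0 1, HasDerivAt f (f' t) t) (hd2 : ∀ t ∈ Icc 0 1, HasDerivAt f' (f'' t) t)
    (hc : ContinuousOn f'' (Icc 0 1)) (h0 : ∀ t ∈ Icc 0 1, |f t| ≤ ρ₀)
    (h1 : ∀ t ∈ Icc 0 1, |f' t| ≤ ρ₁) (h2 : ∀ t ∈ Icc 0 1, |f'' t| ≤ ρ) (m : ℕ) (t : ℝ) :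
    |coeff k n m f * psi k n m t| ≤ waveletMajorant k ρ₀ ρ₁ ρ m := by
  refine (abs_coeff_mul_psi_le hk n m f t).trans ?_
  match m with
  | 0 =>
    calc _ ≤ 1 / π * (ρ₀ * π) := by
          rw [wp, if_pos rfl, one_pow]
          gcongr
          exact abs_cosMoment_le hnode h0 _
      _ = ρ₀ := by field_simp
  | 1 =>
    have hc' : ContinuousOn f' (Icc 0 1) := fun t ht =>
      (hd2 t ht).continuousAt.continuousWithinAt
    calc _ ≤ 2 / π * (ρ₁ * π / (((1 : ℕ) : ℝ) * 2 ^ k)) := by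
          rw [sq_wp_of_ne_zero one_ne_zero]
          gcongr
          exact abs_cosMoment_nat_le hnode hd1 hc' h1 one_ne_zero
      _ = ρ₁ / 2 ^ (k - 1) := by
          rw [Nat.cast_one, two_pow_eq_two_mul_two_pow_pred hk]
          field_simp
  | m + 2 =>
    have h4k : ((2 : ℝ) ^ k) ^ 2 = 2 * 2 ^ (2 * k - 1) := by
      rw [← pow_mul, mul_comm, two_pow_eq_two_mul_two_pow_pred (by omega)]
    calc _ ≤ 2 / π * (ρ * π / (2 ^ k) ^ 2 / ((m + 1) * (m + 3))) := by
          rw [sq_wp_of_ne_zero (m + 1).succ_ne_zero]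
          gcongr
          exact abs_cosMoment_add_two_le hnode hd1 hd2 hc h2 m
      _ = ρ / 2 ^ (2 * k - 1) / ((m + 1) * (m + 3)) := by rw [h4k]; field_simp

end Bounds

theorem summable_abs_and_tendstoUniformlyOn_of_sum_range_le {α : Type*} {F : ℕ → α → ℝ}
    {B : ℕ → ℝ} {s : Set α} {S : ℝ} (hF : ∀ m, ∀ x ∈ s, |F m x| ≤ B m) (hB : ∀ m, 0 ≤ B m)
    (hS : ∀ N, ∑ m ∈ Finset.range N, B m ≤ S) :
    (∀ x ∈ s, Summable fun m => |F m x|) ∧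
      TendstoUniformlyOn (fun N x => ∑ m ∈ Finset.range N, F m x) (fun x => ∑' m, F m x)
        Filter.atTop s ∧
      ∀ x ∈ s, ∀ N, |∑ m ∈ Finset.range N, F m x| ≤ S := by
  have hBsum : Summable B := summable_of_sum_range_le hB hS
  refine ⟨fun x hx => hBsum.of_nonneg_of_le (fun m => abs_nonneg _) (fun m => hF m x hx),
    tendstoUniformlyOn_tsum_nat hBsum hF, fun x hx N => ?_⟩
  calc _ ≤ ∑ m ∈ Finset.range N, |F m x| := Finset.abs_sum_le_sum_abs _ _
    _ ≤ ∑ m ∈ Finset.range N, B m := Finset.sum_le_sum fun m _ => hF m x hx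
    _ ≤ S := hS N

/-- For a C² function with |f| ≤ ρ₀, |f'| ≤ ρ₁, |f''| ≤ ρ on [0,1], the series
Σ_m f_{nm} ψ_{nm}(t) converges absolutely and uniformly on the n-th subinterval,
with partial sums bounded by ρ₀ + ρ₁/2^{k-1} + (3/4)ρ/2^{2k-1}. -/
theorem chebyshev_wavelet_series_bounded (k n : ℕ) (hk : 1 ≤ k) (hn : 1 ≤ n)
    (hn' : n ≤ 2 ^ (k - 1)) (f f' f'' : ℝ → ℝ) (ρ₀ ρ₁ ρ : ℝ)
    (hd1 : ∀ t ∈ Set.Icc (0 : ℝ) 1, HasDerivAt f (f' t) t)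
    (hd2 : ∀ t ∈ Set.Icc (0 : ℝ) 1, HasDerivAt f' (f'' t) t)
    (hc : ContinuousOn f'' (Set.Icc (0 : ℝ) 1))
    (h0 : ∀ t ∈ Set.Icc (0 : ℝ) 1, |f t| ≤ ρ₀)
    (h1 : ∀ t ∈ Set.Icc (0 : ℝ) 1, |f' t| ≤ ρ₁)
    (h2 : ∀ t ∈ Set.Icc (0 : ℝ) 1, |f'' t| ≤ ρ) :
    (∀ t ∈ Set.Icc ((n - 1 : ℝ) / 2 ^ (k - 1)) ((n : ℝ) / 2 ^ (k - 1)),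
        Summable (fun m : ℕ => |coeff k n m f * psi k n m t|)) ∧
    TendstoUniformlyOn
      (fun N : ℕ => fun t : ℝ => ∑ m ∈ Finset.range N, coeff k n m f * psi k n m t)
      (fun t : ℝ => ∑' m : ℕ, coeff k n m f * psi k n m t) Filter.atTop
      (Set.Icc ((n - 1 : ℝ) / 2 ^ (k - 1)) ((n : ℝ) / 2 ^ (k - 1))) ∧
    (∀ t ∈ Set.Icc ((n - 1 : ℝ) / 2 ^ (k - 1)) ((n : ℝ) / 2 ^ (k - 1)), ∀ N : ℕ,
        |∑ m ∈ Finset.range N, coeff k n m f * psi k n m t| ≤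
          ρ₀ + ρ₁ / 2 ^ (k - 1) + (3 / 4) * (ρ / 2 ^ (2 * k - 1))) := by
  have hzero : (0 : ℝ) ∈ Icc 0 1 := left_mem_Icc.mpr zero_le_one
  have hρ₀ : 0 ≤ ρ₀ := (abs_nonneg _).trans (h0 0 hzero)
  have hρ₁ : 0 ≤ ρ₁ := (abs_nonneg _).trans (h1 0 hzero)
  have hρ : 0 ≤ ρ := (abs_nonneg _).trans (h2 0 hzero)
  exact summable_abs_and_tendstoUniformlyOn_of_sum_range_le
    (fun m t _ => abs_coeff_mul_psi_le_waveletMajorant hk (waveletNode_mem_Icc hk hn hn')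
      hd1 hd2 hc h0 h1 h2 m t)
    (waveletMajorant_nonneg hρ₀ hρ₁ hρ) (sum_range_waveletMajorant_le hρ₀ hρ₁ hρ)
end
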